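/- arXiv:1912.09468 — 2 statements merged into one kernel-verified Lean document; each statement's English description precedes it below -/
import Mathlib

section
/- Let γ > 0, σ > 0, μ ∈ ℝ and a, b ∈ ℝ with a ≤ b, and set μ_C = μ − 2σ²/γ and μ_D = μ + 2σ²/γ. Then ∫_ℝ exp(−|w−a|/γ) · exp(−|w−b|/γ) · φ_{μ,σ}(w) dw = exp((2σ² + γ(a+b−2μ))/γ²) · Φ((μ_C − b)/σ) + exp(−(b−a)/γ) · (Φ((b−μ)/σ) − Φ((a−μ)/σ)) + exp((2σ² − γ(a+b−2μ))/γ²) · Φ((a − μ_D)/σ). -/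
open MeasureTheory Real

/-- Standard normal cumulative distribution function. -/
noncomputable def Phi (t : ℝ) : ℝ :=
  ∫ u in Set.Iic t, (Real.sqrt (2 * Real.pi))⁻¹ * Real.exp (-u ^ 2 / 2)

/-- Normal density with mean μ and standard deviation σ. -/
noncomputable def normalPDF (μ σ x : ℝ) : ℝ :=
  (σ * Real.sqrt (2 * Real.pi))⁻¹ * Real.exp (-(x - μ) ^ 2 / (2 * σ ^ 2))

lemma measEmb_affine (σ m : ℝ) (hσ : σ ≠ 0) :
    MeasurableEmbedding (fun u : ℝ => σ * u + m) :=
  ((Homeomorph.mulLeft₀ σ hσ).trans (Homeomorph.addRight m)).isClosedEmbedding.measurableEmbedding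

lemma map_affine (σ m : ℝ) (hσ : 0 < σ) :
    Measure.map (fun u : ℝ => σ * u + m) (ENNReal.ofReal σ • volume) = volume := by
  have h1 : (fun u : ℝ => σ * u + m) = (fun x : ℝ => x + m) ∘ (fun x : ℝ => σ * x) := rfl
  rw [Measure.map_smul, h1,
    ← Measure.map_map (measurable_add_const m) (measurable_const_mul σ),
    Real.map_volume_mul_left hσ.ne', Measure.map_smul, map_add_right_eq_self,
    smul_smul, ← ENNReal.ofReal_mul hσ.le, abs_inv, abs_of_pos hσ,
    mul_inv_cancel₀ hσ.ne', ENNReal.ofReal_one, one_smul]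

lemma integral_Iic_affine (σ m t : ℝ) (hσ : 0 < σ) (g : ℝ → ℝ) :
    ∫ w in Set.Iic t, g w = σ * ∫ u in Set.Iic ((t - m) / σ), g (σ * u + m) := by
  have hemb := measEmb_affine σ m hσ.ne'
  have hpre : (fun u : ℝ => σ * u + m) ⁻¹' Set.Iic t = Set.Iic ((t - m) / σ) := by
    ext u
    simp only [Set.mem_preimage, Set.mem_Iic, le_div_iff₀ hσ]
    constructor <;> intro h <;> nlinarith
  have h := hemb.setIntegral_map (μ := ENNReal.ofReal σ • volume) g (Set.Iic t)
  rw [map_affine σ m hσ, hpre, Measure.restrict_smul, integral_smul_measure, ENNReal.toReal_ofReal hσ.le,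
    smul_eq_mul] at h
  exact h

lemma integral_Iic_normalPDF (σ m t : ℝ) (hσ : 0 < σ) :
    ∫ w in Set.Iic t, normalPDF m σ w = Phi ((t - m) / σ) := by
  rw [integral_Iic_affine σ m t hσ]
  unfold normalPDF Phi
  rw [← integral_const_mul _ _]
  apply setIntegral_congr_fun measurableSet_Iic
  intro u _
  show σ * ((σ * Real.sqrt (2 * π))⁻¹ * Real.exp (-(σ * u + m - m) ^ 2 / (2 * σ ^ 2)))
      = (Real.sqrt (2 * π))⁻¹ * Real.exp (-u ^ 2 / 2)
  have h1 : -(σ * u + m - m) ^ 2 / (2 * σ ^ 2) = -u ^ 2 / 2 := by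
    field_simp
    ring
  rw [h1, mul_inv, ← mul_assoc, ← mul_assoc, mul_inv_cancel₀ hσ.ne', one_mul]

lemma tilt_eq (σ m c : ℝ) (hσ : 0 < σ) (w : ℝ) :
    Real.exp (c * w) * normalPDF m σ w
      = Real.exp (c * m + c ^ 2 * σ ^ 2 / 2) * normalPDF (m + c * σ ^ 2) σ w := by
  unfold normalPDF
  have e3 : -(w - m) ^ 2 / (2 * σ ^ 2) + c * w
      = (c * m + c ^ 2 * σ ^ 2 / 2) + -(w - (m + c * σ ^ 2)) ^ 2 / (2 * σ ^ 2) := by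
    field_simp
    ring
  rw [mul_comm (Real.exp (c * w)), mul_assoc, ← Real.exp_add, e3, Real.exp_add]
  ring

lemma integrable_normalPDF (σ m : ℝ) (hσ : 0 < σ) : Integrable (normalPDF m σ) := by
  have h : normalPDF m σ
      = fun x => (σ * Real.sqrt (2 * π))⁻¹ * Real.exp (-(1 / (2 * σ ^ 2)) * (x - m) ^ 2) := by
    funext x
    unfold normalPDF
    congr 1
    congr 1
    ring
  rw [h]
  exact ((integrable_exp_neg_mul_sq
    (by positivity : (0:ℝ) < 1 / (2 * σ ^ 2))).comp_sub_right m).const_mul _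

lemma integrable_tilt (σ m c : ℝ) (hσ : 0 < σ) :
    Integrable (fun w => Real.exp (c * w) * normalPDF m σ w) := by
  have h : (fun w => Real.exp (c * w) * normalPDF m σ w)
      = fun w => Real.exp (c * m + c ^ 2 * σ ^ 2 / 2) * normalPDF (m + c * σ ^ 2) σ w := by
    funext w; exact tilt_eq σ m c hσ w
  rw [h]
  exact (integrable_normalPDF σ _ hσ).const_mul _

lemma tilt_Iic (σ m c t K s : ℝ) (hσ : 0 < σ)
    (hK : K = Real.exp (c * m + c ^ 2 * σ ^ 2 / 2))
    (hs : s = (t - m - c * σ ^ 2) / σ) :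
    ∫ w in Set.Iic t, Real.exp (c * w) * normalPDF m σ w = K * Phi s := by
  have h : ∀ w ∈ Set.Iic t, Real.exp (c * w) * normalPDF m σ w
      = Real.exp (c * m + c ^ 2 * σ ^ 2 / 2) * normalPDF (m + c * σ ^ 2) σ w := by
    intro w _; exact tilt_eq σ m c hσ w
  rw [setIntegral_congr_fun measurableSet_Iic h, integral_const_mul _ _,
    integral_Iic_normalPDF σ _ t hσ, hK, hs]
  congr 2
  ring

lemma tilt_Ioi (σ m c t K s : ℝ) (hσ : 0 < σ)
    (hK : K = Real.exp (c * m + c ^ 2 * σ ^ 2 / 2))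
    (hs : s = (m + c * σ ^ 2 - t) / σ) :
    ∫ w in Set.Ioi t, Real.exp (c * w) * normalPDF m σ w = K * Phi s := by
  have key := integral_comp_neg_Iic (-t) (fun w => Real.exp (c * w) * normalPDF m σ w)
  rw [neg_neg] at key
  rw [← key]
  have hcong : Set.EqOn (fun x : ℝ => Real.exp (c * -x) * normalPDF m σ (-x))
      (fun x : ℝ => Real.exp (-c * x) * normalPDF (-m) σ x) (Set.Iic (-t)) := by
    intro x _
    simp only
    unfold normalPDF
    have h1 : c * -x = -c * x := by ring
    have h2 : -(-x - m) ^ 2 / (2 * σ ^ 2) = -(x - -m) ^ 2 / (2 * σ ^ 2) := by ring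
    rw [h1, h2]
  rw [setIntegral_congr_fun measurableSet_Iic hcong]
  refine tilt_Iic σ (-m) (-c) (-t) K s hσ ?_ ?_
  · rw [hK]; congr 1; ring
  · rw [hs]; ring

theorem integral_expKernel_sq_mul_normalPDF (γ σ μ a b μC μD : ℝ)
    (hγ : 0 < γ) (hσ : 0 < σ) (hab : a ≤ b)
    (hμC : μC = μ - 2 * σ ^ 2 / γ) (hμD : μD = μ + 2 * σ ^ 2 / γ) :
    ∫ w : ℝ, Real.exp (-|w - a| / γ) * Real.exp (-|w - b| / γ) * normalPDF μ σ w =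
      Real.exp ((2 * σ ^ 2 + γ * (a + b - 2 * μ)) / γ ^ 2) * Phi ((μC - b) / σ) +
        Real.exp (-(b - a) / γ) * (Phi ((b - μ) / σ) - Phi ((a - μ) / σ)) +
        Real.exp ((2 * σ ^ 2 - γ * (a + b - 2 * μ)) / γ ^ 2) * Phi ((a - μD) / σ) := by
  have hγ' := hγ.ne'
  set f : ℝ → ℝ := fun w => Real.exp (-|w - a| / γ) * Real.exp (-|w - b| / γ) * normalPDF μ σ w
    with hf
  -- equalities on each region
  have heq1 : Set.EqOn f
      (fun w => Real.exp (-(a + b) / γ) * (Real.exp ((2 / γ) * w) * normalPDF μ σ w))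
      (Set.Iic a) := by
    intro w hw
    simp only [Set.mem_Iic] at hw
    simp only [hf]
    rw [abs_of_nonpos (by linarith : w - a ≤ 0), abs_of_nonpos (by linarith : w - b ≤ 0),
      ← Real.exp_add, ← mul_assoc, ← Real.exp_add]
    congr 2
    field_simp <;> ring
  have heq2 : Set.EqOn f (fun w => Real.exp (-(b - a) / γ) * normalPDF μ σ w)
      (Set.Ioc a b) := by
    intro w hw
    obtain ⟨hw1, hw2⟩ := hw
    simp only [hf]
    rw [abs_of_nonneg (by linarith : 0 ≤ w - a), abs_of_nonpos (by linarith : w - b ≤ 0),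
      ← Real.exp_add]
    congr 2
    field_simp <;> ring
  have heq3 : Set.EqOn f
      (fun w => Real.exp ((a + b) / γ) * (Real.exp ((-2 / γ) * w) * normalPDF μ σ w))
      (Set.Ioi b) := by
    intro w hw
    simp only [Set.mem_Ioi] at hw
    simp only [hf]
    rw [abs_of_nonneg (by linarith : 0 ≤ w - a), abs_of_nonneg (by linarith : 0 ≤ w - b),
      ← Real.exp_add, ← mul_assoc, ← Real.exp_add]
    congr 2
    field_simp <;> ring
  -- integrability on each region
  have hI1 : IntegrableOn f (Set.Iic a) := by
    exact (((integrable_tilt σ μ (2 / γ) hσ).const_mul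
      (Real.exp (-(a + b) / γ))).integrableOn).congr_fun heq1.symm measurableSet_Iic
  have hI2 : IntegrableOn f (Set.Ioc a b) := by
    exact (((integrable_normalPDF σ μ hσ).const_mul
      (Real.exp (-(b - a) / γ))).integrableOn).congr_fun heq2.symm measurableSet_Ioc
  have hI3 : IntegrableOn f (Set.Ioi b) := by
    exact (((integrable_tilt σ μ (-2 / γ) hσ).const_mul
      (Real.exp ((a + b) / γ))).integrableOn).congr_fun heq3.symm measurableSet_Ioi
  have hI23 : IntegrableOn f (Set.Ioi a) := by
    rw [← Set.Ioc_union_Ioi_eq_Ioi hab]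
    exact hI2.union hI3
  -- split the integral
  have hsplit1 : ∫ w, f w = (∫ w in Set.Iic a, f w) + ∫ w in Set.Ioi a, f w := by
    rw [← setIntegral_union (Set.Iic_disjoint_Ioi le_rfl) measurableSet_Ioi hI1 hI23,
      Set.Iic_union_Ioi, setIntegral_univ]
  have hsplit2 : ∫ w in Set.Ioi a, f w
      = (∫ w in Set.Ioc a b, f w) + ∫ w in Set.Ioi b, f w := by
    rw [← setIntegral_union (Set.Ioc_disjoint_Ioi le_rfl) measurableSet_Ioi hI2 hI3,
      Set.Ioc_union_Ioi_eq_Ioi hab]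
  -- compute each piece
  have e1 : ∫ w in Set.Iic a, f w
      = Real.exp ((2 * σ ^ 2 - γ * (a + b - 2 * μ)) / γ ^ 2) * Phi ((a - μD) / σ) := by
    rw [setIntegral_congr_fun measurableSet_Iic heq1, integral_const_mul _ _,
      tilt_Iic σ μ (2 / γ) a _ _ hσ rfl rfl, ← mul_assoc, ← Real.exp_add]
    congr 2
    · field_simp <;> ring
    · rw [hμD]; congr 1; field_simp <;> ring
  have e2 : ∫ w in Set.Ioc a b, f w
      = Real.exp (-(b - a) / γ) * (Phi ((b - μ) / σ) - Phi ((a - μ) / σ)) := by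
    rw [setIntegral_congr_fun measurableSet_Ioc heq2, integral_const_mul _ _]
    congr 1
    have hu := setIntegral_union (f := normalPDF μ σ) (μ := volume)
      (s := Set.Iic a) (t := Set.Ioc a b) (Set.Iic_disjoint_Ioc le_rfl) measurableSet_Ioc
      ((integrable_normalPDF σ μ hσ).integrableOn)
      ((integrable_normalPDF σ μ hσ).integrableOn)
    rw [Set.Iic_union_Ioc_eq_Iic hab, integral_Iic_normalPDF σ μ b hσ,
      integral_Iic_normalPDF σ μ a hσ] at hu
    linarith
  have e3 : ∫ w in Set.Ioi b, f w
      = Real.exp ((2 * σ ^ 2 + γ * (a + b - 2 * μ)) / γ ^ 2) * Phi ((μC - b) / σ) := by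
    rw [setIntegral_congr_fun measurableSet_Ioi heq3, integral_const_mul _ _,
      tilt_Ioi σ μ (-2 / γ) b _ _ hσ rfl rfl, ← mul_assoc, ← Real.exp_add]
    congr 2
    · field_simp <;> ring
    · rw [hμC]; congr 1; field_simp <;> ring
  rw [hsplit1, hsplit2, e1, e2, e3]
  ring
end

section
/- Let γ > 0, σ > 0 and μ, a ∈ ℝ. Set μ_A = μ − √5·σ²/γ, μ_B = μ + √5·σ²/γ, e10 = 1 − √5·a/γ + 5a²/(3γ²), e11 = √5/γ − 10a/(3γ²), e12 = 5/(3γ²), e20 = 1 + √5·a/γ + 5a²/(3γ²), e21 = √5/γ + 10a/(3γ²), e22 = 5/(3γ²). Then ∫_ℝ (1 + √5·|w−a|/γ + 5(w−a)²/(3γ²)) · exp(−√5·|w−a|/γ) · φ_{μ,σ}(w) dw = exp((5σ² + 2√5·γ(a−μ))/(2γ²)) · ((e10 + e11·μ_A + e12·(μ_A² + σ²)) · Φ((μ_A − a)/σ) + (e11 + e12·(μ_A + a)) · (σ/√(2π)) · exp(−(a−μ_A)²/(2σ²))) + exp((5σ² − 2√5·γ(a−μ))/(2γ²)) · ((e20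 − e21·μ_B + e22·(μ_B² + σ²)) · Φ((a − μ_B)/σ) + (e21 + e22·(−μ_B − a)) · (σ/√(2π)) · exp(−(a−μ_B)²/(2σ²))). -/
open MeasureTheory Real

/-!
Splitting the line at `w = a` removes the absolute value: with `β = √5 / γ`, on each half-line
the kernel is a quadratic in `w` times `exp (± β w)`, and `exp (s w) φ_{μ,σ}(w)` is a constant
multiple of the shifted density `φ_{μ + s σ², σ}(w)`. A quadratic `p + q w + r w²` times `φ_{m,σ}`
has the explicit primitive `A Φ((w - m) / σ) - (q + r (w + m)) σ² φ_{m,σ}(w)`, with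
`A = p + q m + r (m² + σ²)`, which vanishes at `-∞`; the half-line `(a, ∞)` is reduced to
`(-∞, -a]` by `w ↦ -w`.
-/

open Filter Set Topology

lemma continuous_normalPDF (m σ : ℝ) : Continuous (normalPDF m σ) := by
  unfold normalPDF; fun_prop

lemma normalPDF_neg (m σ x : ℝ) : normalPDF m σ (-x) = normalPDF (-m) σ x := by
  simp only [normalPDF]; ring_nf

lemma normalPDF_zero_one_sub_div {σ : ℝ} (hσ : σ ≠ 0) (m x : ℝ) :
    normalPDF 0 1 ((x - m) / σ) / σ = normalPDF m σ x := by
  simp only [normalPDF]; field_simp; ring_nf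

lemma sq_mul_normalPDF {σ : ℝ} (hσ : σ ≠ 0) (m x : ℝ) :
    σ ^ 2 * normalPDF m σ x = σ / √(2 * π) * exp (-(x - m) ^ 2 / (2 * σ ^ 2)) := by
  simp only [normalPDF]; field_simp

lemma exp_mul_mul_normalPDF {σ : ℝ} (hσ : σ ≠ 0) (s m x : ℝ) :
    exp (s * x) * normalPDF m σ x =
      exp (s * m + s ^ 2 * σ ^ 2 / 2) * normalPDF (m + s * σ ^ 2) σ x := by
  simp only [normalPDF]
  rw [mul_left_comm, ← exp_add, mul_left_comm, ← exp_add]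
  congr 2
  field_simp
  ring

lemma hasDerivAt_normalPDF (m σ x : ℝ) :
    HasDerivAt (normalPDF m σ) (-(x - m) / σ ^ 2 * normalPDF m σ x) x := by
  refine ((((hasDerivAt_id' x).sub_const m).fun_pow 2).fun_neg.div_const (2 * σ ^ 2)).exp.const_mul
    (σ * √(2 * π))⁻¹ |>.congr_deriv ?_
  simp only [normalPDF]; ring

lemma integrable_sub_pow_mul_normalPDF (m : ℝ) {σ : ℝ} (hσ : 0 < σ) (k : ℕ) :
    Integrable fun x => (x - m) ^ k * normalPDF m σ x := by
  have h := ((integrable_rpow_mul_exp_neg_mul_sq (b := (2 * σ ^ 2)⁻¹) (by positivity)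
    (s := k) (by linarith [k.cast_nonneg (α := ℝ)])).comp_sub_right m).const_mul (σ * √(2 * π))⁻¹
  refine h.congr (ae_of_all _ fun x => ?_)
  simp only [normalPDF, rpow_natCast]
  ring_nf

lemma integrable_quadratic_mul_normalPDF (m : ℝ) {σ : ℝ} (hσ : 0 < σ) (p q r : ℝ) :
    Integrable fun x => (p + q * x + r * x ^ 2) * normalPDF m σ x := by
  have h := (((integrable_sub_pow_mul_normalPDF m hσ 0).const_mul (p + q * m + r * m ^ 2)).add
    ((integrable_sub_pow_mul_normalPDF m hσ 1).const_mul (q + 2 * r * m))).add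
    ((integrable_sub_pow_mul_normalPDF m hσ 2).const_mul r)
  refine h.congr (ae_of_all _ fun x => ?_)
  simp only [Pi.add_apply]; ring

lemma tendsto_linear_mul_normalPDF_atBot (m : ℝ) {σ : ℝ} (hσ : 0 < σ) (c d : ℝ) :
    Tendsto (fun x => (c + d * x) * normalPDF m σ x) atBot (𝓝 0) := by
  refine tendsto_zero_of_hasDerivAt_of_integrableOn_Iic (a := 0)
    (f' := fun x =>
      ((d * σ ^ 2 + c * m) + (d * m - c) * x + (-d) * x ^ 2) * normalPDF m σ x / σ ^ 2)
    (fun x _ => ?_) ((integrable_quadratic_mul_normalPDF m hσ _ _ _).div_const _).integrableOn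
    (integrable_quadratic_mul_normalPDF m hσ c d 0
      |>.congr (ae_of_all _ fun x => by ring)).integrableOn
  refine (((hasDerivAt_id' x).const_mul d).const_add c).mul (hasDerivAt_normalPDF m σ x)
    |>.congr_deriv ?_
  field_simp
  ring

lemma Phi_eq_setIntegral_normalPDF (t : ℝ) : Phi t = ∫ u in Iic t, normalPDF 0 1 u := by
  simp only [Phi, normalPDF]; ring_nf

lemma hasDerivAt_Phi (t : ℝ) : HasDerivAt Phi (normalPDF 0 1 t) t := by
  have hint : Integrable (normalPDF 0 1) := by
    simpa using integrable_sub_pow_mul_normalPDF 0 one_pos 0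
  have h : Phi = fun t => Phi 0 + ∫ u in (0 : ℝ)..t, normalPDF 0 1 u := by
    ext t
    rw [Phi_eq_setIntegral_normalPDF, Phi_eq_setIntegral_normalPDF,
      ← intervalIntegral.integral_Iic_sub_Iic hint.integrableOn hint.integrableOn]
    ring
  rw [h]
  exact (intervalIntegral.integral_hasDerivAt_right hint.intervalIntegrable
    ((continuous_normalPDF 0 1).stronglyMeasurableAtFilter _ _)
    (continuous_normalPDF 0 1).continuousAt).const_add _

lemma hasDerivAt_Phi_sub_div {σ : ℝ} (hσ : σ ≠ 0) (m x : ℝ) :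
    HasDerivAt (fun x => Phi ((x - m) / σ)) (normalPDF m σ x) x := by
  refine (hasDerivAt_Phi ((x - m) / σ)).comp x (((hasDerivAt_id' x).sub_const m).div_const σ)
    |>.congr_deriv ?_
  rw [← normalPDF_zero_one_sub_div hσ m x, mul_one_div]

lemma hasDerivAt_quadratic_mul_normalPDF_antideriv {σ : ℝ} (hσ : σ ≠ 0) (m p q r x : ℝ) :
    HasDerivAt (fun w => (p + q * m + r * (m ^ 2 + σ ^ 2)) * Phi ((w - m) / σ) -
        (q + r * (w + m)) * (σ ^ 2 * normalPDF m σ w))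
      ((p + q * x + r * x ^ 2) * normalPDF m σ x) x := by
  refine ((hasDerivAt_Phi_sub_div hσ m x).const_mul _).sub
    ((((hasDerivAt_id' x).add_const m).const_mul r).const_add q |>.mul
      ((hasDerivAt_normalPDF m σ x).const_mul _)) |>.congr_deriv ?_
  field_simp
  ring

theorem integral_Iic_quadratic_mul_normalPDF (m : ℝ) {σ : ℝ} (hσ : 0 < σ) (p q r b : ℝ) :
    ∫ w in Iic b, (p + q * w + r * w ^ 2) * normalPDF m σ w =
      (p + q * m + r * (m ^ 2 + σ ^ 2)) * Phi ((b - m) / σ) -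
        (q + r * (b + m)) * (σ ^ 2 * normalPDF m σ b) := by
  have hPhi : Tendsto (fun w => Phi ((w - m) / σ)) atBot (𝓝 0) := by
    simp_rw [Phi]
    exact tendsto_integral_Iic_zero
      ((tendsto_atBot_add_const_right _ (-m) tendsto_id).atBot_div_const hσ)
  have hlin : Tendsto (fun w => (q + r * (w + m)) * (σ ^ 2 * normalPDF m σ w)) atBot (𝓝 0) :=
    (tendsto_linear_mul_normalPDF_atBot m hσ ((q + r * m) * σ ^ 2) (r * σ ^ 2)).congr
      fun w => by ring
  rw [integral_Iic_of_hasDerivAt_of_tendsto'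
    (fun x _ => hasDerivAt_quadratic_mul_normalPDF_antideriv hσ.ne' m p q r x)
    (integrable_quadratic_mul_normalPDF m hσ p q r).integrableOn
    (by simpa using (hPhi.const_mul _).sub hlin), sub_zero]

theorem integral_Ioi_quadratic_mul_normalPDF (m : ℝ) {σ : ℝ} (hσ : 0 < σ) (p q r b : ℝ) :
    ∫ w in Ioi b, (p + q * w + r * w ^ 2) * normalPDF m σ w =
      (p + q * m + r * (m ^ 2 + σ ^ 2)) * Phi ((m - b) / σ) +
        (q + r * (b + m)) * (σ ^ 2 * normalPDF m σ b) := by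
  have h := integral_Iic_quadratic_mul_normalPDF (-m) hσ p (-q) r (-b)
  rw [← normalPDF_neg, neg_neg] at h
  rw [← neg_neg b, ← integral_comp_neg_Iic, neg_neg]
  simp_rw [normalPDF_neg]
  convert h using 1
  · congr 1; ext w; ring
  · ring_nf

/-- The Matérn-5/2 kernel `c_γ(w, a) = maternKernel (√5 / γ) (w - a)`. -/
noncomputable def maternKernel (β t : ℝ) : ℝ :=
  (1 + β * |t| + β ^ 2 * t ^ 2 / 3) * exp (-(β * |t|))

noncomputable def maternBranch (s t : ℝ) : ℝ :=
  (1 - s * t + s ^ 2 * t ^ 2 / 3) * exp (s * t)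

lemma maternKernel_eq_maternBranch_of_nonpos {t : ℝ} (ht : t ≤ 0) (β : ℝ) :
    maternKernel β t = maternBranch β t := by
  rw [maternKernel, maternBranch, abs_of_nonpos ht]
  ring_nf

lemma maternKernel_eq_maternBranch_neg_of_nonneg {t : ℝ} (ht : 0 ≤ t) (β : ℝ) :
    maternKernel β t = maternBranch (-β) t := by
  rw [maternKernel, maternBranch, abs_of_nonneg ht]
  ring_nf

lemma maternBranch_sub_mul_normalPDF {σ : ℝ} (hσ : σ ≠ 0) (s a μ w : ℝ) :
    maternBranch s (w - a) * normalPDF μ σ w =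
      exp (s * (μ - a) + s ^ 2 * σ ^ 2 / 2) *
        (((1 + s * a + s ^ 2 * a ^ 2 / 3) + (-s - 2 * s ^ 2 * a / 3) * w + s ^ 2 / 3 * w ^ 2) *
          normalPDF (μ + s * σ ^ 2) σ w) := by
  have hw : exp (s * (w - a)) = exp (-(s * a)) * exp (s * w) := by rw [← exp_add]; ring_nf
  have hμ : exp (s * (μ - a) + s ^ 2 * σ ^ 2 / 2) =
      exp (-(s * a)) * exp (s * μ + s ^ 2 * σ ^ 2 / 2) := by rw [← exp_add]; ring_nf
  rw [maternBranch, hw, hμ]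
  linear_combination (1 - s * (w - a) + s ^ 2 * (w - a) ^ 2 / 3) * exp (-(s * a)) *
    exp_mul_mul_normalPDF hσ s μ w

lemma integrable_maternBranch_sub_mul_normalPDF {σ : ℝ} (hσ : 0 < σ) (s a μ : ℝ) :
    Integrable fun w => maternBranch s (w - a) * normalPDF μ σ w := by
  simp_rw [maternBranch_sub_mul_normalPDF hσ.ne']
  exact (integrable_quadratic_mul_normalPDF _ hσ _ _ _).const_mul _

lemma setIntegral_maternBranch_sub_mul_normalPDF {σ : ℝ} (hσ : σ ≠ 0) (s a μ : ℝ) (S : Set ℝ) :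
    ∫ w in S, maternBranch s (w - a) * normalPDF μ σ w =
      exp (s * (μ - a) + s ^ 2 * σ ^ 2 / 2) *
        ∫ w in S,
          ((1 + s * a + s ^ 2 * a ^ 2 / 3) + (-s - 2 * s ^ 2 * a / 3) * w + s ^ 2 / 3 * w ^ 2) *
            normalPDF (μ + s * σ ^ 2) σ w := by
  simp_rw [maternBranch_sub_mul_normalPDF hσ, integral_const_mul]

theorem integral_maternKernel_sub_mul_normalPDF {σ : ℝ} (hσ : 0 < σ) (β a μ : ℝ) :
    ∫ w, maternKernel β (w - a) * normalPDF μ σ w =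
      (∫ w in Iic a, maternBranch β (w - a) * normalPDF μ σ w) +
        ∫ w in Ioi a, maternBranch (-β) (w - a) * normalPDF μ σ w := by
  have hIic : EqOn (fun w => maternKernel β (w - a) * normalPDF μ σ w)
      (fun w => maternBranch β (w - a) * normalPDF μ σ w) (Iic a) := fun w hw => by
    simp only [maternKernel_eq_maternBranch_of_nonpos (sub_nonpos.2 (mem_Iic.1 hw))]
  have hIoi : EqOn (fun w => maternKernel β (w - a) * normalPDF μ σ w)
      (fun w => maternBranch (-β) (w - a) * normalPDF μ σ w) (Ioi a) := fun w hw => by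
    simp only [maternKernel_eq_maternBranch_neg_of_nonneg (sub_nonneg.2 (mem_Ioi.1 hw).le)]
  rw [← intervalIntegral.integral_Iic_add_Ioi
      ((integrable_maternBranch_sub_mul_normalPDF hσ β a μ).integrableOn.congr_fun hIic.symm
        measurableSet_Iic)
      ((integrable_maternBranch_sub_mul_normalPDF hσ (-β) a μ).integrableOn.congr_fun hIoi.symm
        measurableSet_Ioi),
    setIntegral_congr_fun measurableSet_Iic hIic, setIntegral_congr_fun measurableSet_Ioi hIoi]

theorem integral_matern25_mul_normalPDF_general (γ σ μ a μA μB e10 e11 e12 e20 e21 e22 : ℝ)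
    (hσ : 0 < σ)
    (hμA : μA = μ - Real.sqrt 5 * σ ^ 2 / γ) (hμB : μB = μ + Real.sqrt 5 * σ ^ 2 / γ)
    (he10 : e10 = 1 - Real.sqrt 5 * a / γ + 5 * a ^ 2 / (3 * γ ^ 2))
    (he11 : e11 = Real.sqrt 5 / γ - 10 * a / (3 * γ ^ 2))
    (he12 : e12 = 5 / (3 * γ ^ 2))
    (he20 : e20 = 1 + Real.sqrt 5 * a / γ + 5 * a ^ 2 / (3 * γ ^ 2))
    (he21 : e21 = Real.sqrt 5 / γ + 10 * a / (3 * γ ^ 2))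
    (he22 : e22 = 5 / (3 * γ ^ 2)) :
    ∫ w : ℝ,
        (1 + Real.sqrt 5 * |w - a| / γ + 5 * (w - a) ^ 2 / (3 * γ ^ 2)) *
          Real.exp (-(Real.sqrt 5) * |w - a| / γ) * normalPDF μ σ w =
      Real.exp ((5 * σ ^ 2 + 2 * Real.sqrt 5 * γ * (a - μ)) / (2 * γ ^ 2)) *
        ((e10 + e11 * μA + e12 * (μA ^ 2 + σ ^ 2)) * Phi ((μA - a) / σ) +
          (e11 + e12 * (μA + a)) * (σ / Real.sqrt (2 * Real.pi)) *
            Real.exp (-(a - μA) ^ 2 / (2 * σ ^ 2))) +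
      Real.exp ((5 * σ ^ 2 - 2 * Real.sqrt 5 * γ * (a - μ)) / (2 * γ ^ 2)) *
        ((e20 - e21 * μB + e22 * (μB ^ 2 + σ ^ 2)) * Phi ((a - μB) / σ) +
          (e21 + e22 * (-μB - a)) * (σ / Real.sqrt (2 * Real.pi)) *
            Real.exp (-(a - μB) ^ 2 / (2 * σ ^ 2))) := by
  have h5 : √5 ^ 2 = 5 := sq_sqrt (by norm_num)
  have hkernel : ∀ w, (1 + √5 * |w - a| / γ + 5 * (w - a) ^ 2 / (3 * γ ^ 2)) *
      exp (-√5 * |w - a| / γ) = maternKernel (√5 / γ) (w - a) := fun w => by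
    rw [maternKernel, div_pow, h5]; ring_nf
  have hmA : μ + -(√5 / γ) * σ ^ 2 = μA := by rw [hμA]; ring
  have hmB : μ + √5 / γ * σ ^ 2 = μB := by rw [hμB]; ring
  have hexpA : -(√5 / γ) * (μ - a) + (-(√5 / γ)) ^ 2 * σ ^ 2 / 2 =
      (5 * σ ^ 2 + 2 * √5 * γ * (a - μ)) / (2 * γ ^ 2) := by
    rw [neg_sq, div_pow, h5]; field_simp; ring
  have hexpB : √5 / γ * (μ - a) + (√5 / γ) ^ 2 * σ ^ 2 / 2 =
      (5 * σ ^ 2 - 2 * √5 * γ * (a - μ)) / (2 * γ ^ 2) := by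
    rw [div_pow, h5]; field_simp; ring
  simp_rw [hkernel]
  rw [integral_maternKernel_sub_mul_normalPDF hσ,
    setIntegral_maternBranch_sub_mul_normalPDF hσ.ne',
    setIntegral_maternBranch_sub_mul_normalPDF hσ.ne', integral_Iic_quadratic_mul_normalPDF _ hσ,
    integral_Ioi_quadratic_mul_normalPDF _ hσ, sq_mul_normalPDF hσ.ne', sq_mul_normalPDF hσ.ne',
    hmA, hmB, hexpA, hexpB]
  subst he10 he11 he12 he20 he21 he22
  simp only [neg_sq, div_pow, h5]
  ring

theorem integral_matern25_mul_normalPDF (γ σ μ a μA μB e10 e11 e12 e20 e21 e22 : ℝ)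
    (hγ : 0 < γ) (hσ : 0 < σ)
    (hμA : μA = μ - Real.sqrt 5 * σ ^ 2 / γ) (hμB : μB = μ + Real.sqrt 5 * σ ^ 2 / γ)
    (he10 : e10 = 1 - Real.sqrt 5 * a / γ + 5 * a ^ 2 / (3 * γ ^ 2))
    (he11 : e11 = Real.sqrt 5 / γ - 10 * a / (3 * γ ^ 2))
    (he12 : e12 = 5 / (3 * γ ^ 2))
    (he20 : e20 = 1 + Real.sqrt 5 * a / γ + 5 * a ^ 2 / (3 * γ ^ 2))
    (he21 : e21 = Real.sqrt 5 / γ + 10 * a / (3 * γ ^ 2))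
    (he22 : e22 = 5 / (3 * γ ^ 2)) :
    ∫ w : ℝ,
        (1 + Real.sqrt 5 * |w - a| / γ + 5 * (w - a) ^ 2 / (3 * γ ^ 2)) *
          Real.exp (-(Real.sqrt 5) * |w - a| / γ) * normalPDF μ σ w =
      Real.exp ((5 * σ ^ 2 + 2 * Real.sqrt 5 * γ * (a - μ)) / (2 * γ ^ 2)) *
        ((e10 + e11 * μA + e12 * (μA ^ 2 + σ ^ 2)) * Phi ((μA - a) / σ) +
          (e11 + e12 * (μA + a)) * (σ / Real.sqrt (2 * Real.pi)) *
            Real.exp (-(a - μA) ^ 2 / (2 * σ ^ 2))) +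
      Real.exp ((5 * σ ^ 2 - 2 * Real.sqrt 5 * γ * (a - μ)) / (2 * γ ^ 2)) *
        ((e20 - e21 * μB + e22 * (μB ^ 2 + σ ^ 2)) * Phi ((a - μB) / σ) +
          (e21 + e22 * (-μB - a)) * (σ / Real.sqrt (2 * Real.pi)) *
            Real.exp (-(a - μB) ^ 2 / (2 * σ ^ 2))) :=
  integral_matern25_mul_normalPDF_general γ σ μ a μA μB e10 e11 e12 e20 e21 e22 hσ hμA hμB he10 he11
    he12 he20 he21 he22
end
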